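/- Suppose v is a vexillary permutation and let ρ(v) be the smallest partition whose Young diagram Y_{ρ(v)} contains the Rothe diagram D_v. Then for every bumpless pipe dream B ∈ BPD(v), the set of positions of crossing tiles of B is disjoint from Y_{ρ(v)}. -/

import Mathlib

/- Common definitions for formalizing "Lenart's bijection via bumpless pipe dreams"
   (Gregory–Hamaker). -/

namespace BPDPaper

/-! ### Permutations of the positive integers -/

/-- We model permutations of the positive integers as permutations of `ℕ`
(fixing `0`, with finite support). -/
abbrev Perm' := Equiv.Perm ℕ

/-- The simple transposition `s_a = t_{a,a+1}`. -/
def sT (a : ℕ) : Perm' := Equiv.swap a (a + 1)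

/-- The transposition `t_{ij}`. -/
def tT (i j : ℕ) : Perm' := Equiv.swap i j

/-- The product `s_{a_1} ⋯ s_{a_p}` of a word. -/
def wordProd (l : List ℕ) : Perm' := (l.map sT).prod

/-- `l` is a word for `w` (in the letters `s_1, s_2, …`). -/
def IsWord (w : Perm') (l : List ℕ) : Prop := (∀ x ∈ l, 1 ≤ x) ∧ wordProd l = w

/-- The Coxeter length `ℓ(w)`: the minimal length of a word for `w`. -/
noncomputable def plen (w : Perm') : ℕ :=
  sInf {m | ∃ l : List ℕ, IsWord w l ∧ l.length = m}

/-- `l` is a reduced word for `w`. -/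
def IsReducedWord (w : Perm') (l : List ℕ) : Prop := IsWord w l ∧ l.length = plen w

/-- A permutation of the positive integers: fixes `0` and all but finitely many points. -/
def IsPerm (w : Perm') : Prop := w 0 = 0 ∧ {k | w k ≠ k}.Finite

/-- `k` is a descent of `w`. -/
def Descent (w : Perm') (k : ℕ) : Prop := 1 ≤ k ∧ w (k + 1) < w k

/-- `w` is Grassmannian: at most one descent. -/
def Grassmannian (w : Perm') : Prop := IsPerm w ∧ Set.Subsingleton {k | Descent w k}

/-- `w` is vexillary: no indices `i < j < k < l` with `w j < w i < w l < w k`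
(pattern 2143 avoidance). -/
def Vexillary (w : Perm') : Prop := IsPerm w ∧
  ¬ ∃ i j k l : ℕ, 1 ≤ i ∧ i < j ∧ j < k ∧ k < l ∧ w j < w i ∧ w i < w l ∧ w l < w k

/-- The code `c_i(w) = #{j > i : w j < w i}`. -/
noncomputable def codeOf (w : Perm') (i : ℕ) : ℕ := Nat.card {j : ℕ | i < j ∧ w j < w i}

/-- Insert into a weakly decreasing list, keeping it weakly decreasing. -/
def insDesc (x : ℕ) : List ℕ → List ℕ
  | [] => [x]
  | y :: ys => if y < x then x :: y :: ys else y :: insDesc x ys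

/-- Sort a list into weakly decreasing order. -/
def sortDesc (l : List ℕ) : List ℕ := l.foldr insDesc []

/-- The shape `λ(w)`: the code `(c_1(w), …, c_n(w))` sorted decreasingly, zeros dropped
(`n` is any bound on the support of `w`). -/
noncomputable def shapeOf (w : Perm') (n : ℕ) : List ℕ :=
  (sortDesc ((List.range' 1 n).map (codeOf w))).filter (fun x => decide (0 < x))

/-- The Rothe diagram `D_w = {(i, w j) : i < j, w j < w i}` (matrix coordinates). -/
def RotheDiagram (w : Perm') : Set (ℕ × ℕ) :=
  {p | 1 ≤ p.1 ∧ ∃ j, p.1 < j ∧ w j < w p.1 ∧ p.2 = w j}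

/-- `φ_i`: the row index of the southeast-most box of `D_w` on the diagonal through
`(i, λ_i)`. -/
noncomputable def flagEntry (w : Perm') (i li : ℕ) : ℕ :=
  sSup {r : ℕ | ∃ c : ℕ, (r, c) ∈ RotheDiagram w ∧ (c : ℤ) - (r : ℤ) = (li : ℤ) - (i : ℤ)}

/-- The flag `φ(w) = (φ_1, …, φ_m)` of a vexillary permutation. -/
noncomputable def flagOf (w : Perm') (n : ℕ) : List ℕ :=
  (List.range (shapeOf w n).length).map (fun k => flagEntry w (k + 1) ((shapeOf w n).getD k 0))

/-- `ρ(w)_i`: the `i`-th row of the smallest partition whose Young diagram contains `D_w`. -/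
noncomputable def rhoRow (w : Perm') (i : ℕ) : ℕ :=
  sSup {c : ℕ | ∃ r : ℕ, i ≤ r ∧ (r, c) ∈ RotheDiagram w}

/-! ### Tableaux (lists of rows), flagged SSYT, jeu de taquin -/

/-- Semistandard Young tableau of partition shape, presented as a list of rows. -/
def IsSSYT (T : List (List ℕ)) : Prop :=
  (∀ row ∈ T, row ≠ []) ∧
  List.Chain' (fun r1 r2 : List ℕ => r2.length ≤ r1.length) T ∧
  (∀ row ∈ T, List.Chain' (· ≤ ·) row) ∧
  (∀ i j : ℕ, i + 1 < T.length → j < (T.getD (i + 1) []).length →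
    (T.getD i []).getD j 0 < (T.getD (i + 1) []).getD j 0)

/-- `φ`-flagged semistandard Young tableaux of shape `λ`: the last entry of row `i`
is at most `φ_i`. -/
def IsFlaggedSSYT (lam phi : List ℕ) (T : List (List ℕ)) : Prop :=
  IsSSYT T ∧ T.map List.length = lam ∧
  ∀ i : ℕ, i < T.length → (T.getD i []).getLastD 0 ≤ phi.getD i 0

/-- Semistandard Young tableaux with all entries at most `k` (`SSYT_k`). -/
def IsSSYTBounded (k : ℕ) (T : List (List ℕ)) : Prop :=
  IsSSYT T ∧ ∀ row ∈ T, ∀ x ∈ row, x ≤ k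

/-- Set an entry of a tableau. -/
def setEntry (T : List (List ℕ)) (r c x : ℕ) : List (List ℕ) :=
  T.set r ((T.getD r []).set c x)

/-- One jeu de taquin slide with the empty tile at `(r, c)` (0-indexed):
swap the empty tile with the smaller of the entries to its right and below
(ties move down; missing boxes are `∞`); when both are missing, delete the cell. -/
def jdtAux : ℕ → List (List ℕ) → ℕ → ℕ → List (List ℕ)
  | 0, T, _, _ => T
  | fuel + 1, T, r, c =>
    match (T.getD r [])[c + 1]?, (T.getD (r + 1) [])[c]? with
    | none, none => (T.set r ((T.getD r []).take c)).filter (fun row => !row.isEmpty)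
    | some x, none => jdtAux fuel (setEntry T r c x) r (c + 1)
    | none, some y => jdtAux fuel (setEntry T r c y) (r + 1) c
    | some x, some y =>
      if x < y then jdtAux fuel (setEntry T r c x) r (c + 1)
      else jdtAux fuel (setEntry T r c y) (r + 1) c

/-- `jdt(T)`: remove the top-left box of `T` and rectify by jeu de taquin. -/
def jdt (T : List (List ℕ)) : List (List ℕ) :=
  jdtAux ((T.map List.length).sum + 1) T 0 0

/-! ### Edelman–Greene column insertion and the recording tableau -/

/-- Edelman–Greene insertion of `x` into one increasing column `C`.
Returns the new column together with `none` (if `x` was appended, creating a new box)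
or `some y` (where `y` is to be inserted into the next column). -/
def colIns (x : ℕ) (C : List ℕ) : List ℕ × Option ℕ :=
  if C.all (fun c => decide (c < x)) then (C ++ [x], none)
  else if x ∈ C ∧ (x + 1) ∈ C then (C, some (x + 1))
  else
    match C.find? (fun c => decide (x < c)) with
    | some ck => (C.map (fun c => if c = ck then x else c), some ck)
    | none => (C, none)

/-- Edelman–Greene insertion of `x` into a tableau presented as a list of columns.
Returns the new columns and the (0-indexed) column containing the new box. -/
def egInsert : List (List ℕ) → ℕ → (List (List ℕ)) × ℕ
  | [], x => ([[x]], 0)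
  | C :: rest, x =>
    match colIns x C with
    | (C', none) => (C' :: rest, 0)
    | (C', some y) =>
      let res := egInsert rest y
      (C' :: res.1, res.2 + 1)

/-- One step of the Edelman–Greene algorithm on the pair (insertion, recording) tableau:
insert `ra.2` into `P` and record `ra.1` in the new box of `Q`. -/
def egStep (PQ : (List (List ℕ)) × (List (List ℕ))) (ra : ℕ × ℕ) :
    (List (List ℕ)) × (List (List ℕ)) :=
  let res := egInsert PQ.1 ra.2
  let Q := PQ.2
  let Q' := if res.2 < Q.length then Q.set res.2 (Q.getD res.2 [] ++ [ra.1]) else Q ++ [[ra.1]]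
  (res.1, Q')

/-- A biword `(r_1,…,r_l ; a_1,…,a_l)`. -/
structure Biword where
  top : List ℕ
  bot : List ℕ

/-- The (insertion, recording) column tableaux of a biword under Edelman–Greene insertion. -/
def egPQ (P : Biword) : (List (List ℕ)) × (List (List ℕ)) :=
  (P.top.zip P.bot).foldl egStep ([], [])

/-- Convert a tableau presented as a list of columns into a list of rows. -/
def colsToRows (cols : List (List ℕ)) : List (List ℕ) :=
  (List.range ((cols.map List.length).foldr max 0)).map
    (fun i => cols.filterMap (fun col => col[i]?))

/-- The Edelman–Greene recording tableau `Q̃` of a biword (as a list of rows). -/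
def Qtilde (P : Biword) : List (List ℕ) := colsToRows (egPQ P).2

/-- The Edelman–Greene insertion tableau `P̃` of a biword (as a list of rows). -/
def Ptilde (P : Biword) : List (List ℕ) := colsToRows (egPQ P).1

/-- `(r ; a)` is a reduced compatible sequence for `w`: `a` is a reduced word for `w`,
`r` is weakly increasing, `r_i ≤ a_i`, and `r_i < r_{i+1}` whenever `a_i < a_{i+1}`.
Membership in `PD(w)`. -/
def IsCompatible (w : Perm') (P : Biword) : Prop :=
  IsReducedWord w P.bot ∧
  List.Chain' (· ≤ ·) P.top ∧
  List.Forall₂ (· ≤ ·) P.top P.bot ∧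
  (∀ m : ℕ, m + 1 < P.bot.length →
    P.bot.getD m 0 < P.bot.getD (m + 1) 0 → P.top.getD m 0 < P.top.getD (m + 1) 0)

/-! ### Bumpless pipe dreams -/

/-- The tiles: blank, vertical, horizontal, ⌐-elbow (S–E, "r"), ⌟-elbow (W–N, "j"),
crossing, and the bump tile (for almost bumpless pipe dreams). -/
inductive Tile
  | blank | vert | horiz | se | nw | cross | bump
deriving DecidableEq

/-- A square grid of tiles; rows and columns are 1-indexed, rows increase downward. -/
structure Grid where
  n : ℕ
  tile : ℕ → ℕ → Tile

inductive Dir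
  | north | east
deriving DecidableEq

def hasN : Tile → Bool
  | .vert => true | .nw => true | .cross => true | .bump => true | _ => false
def hasS : Tile → Bool
  | .vert => true | .se => true | .cross => true | .bump => true | _ => false
def hasE : Tile → Bool
  | .horiz => true | .se => true | .cross => true | .bump => true | _ => false
def hasW : Tile → Bool
  | .horiz => true | .nw => true | .cross => true | .bump => true | _ => false

/-- The outgoing direction of a pipe through a tile, given the incoming heading
(`north` = entered through the south edge, `east` = entered through the west edge). -/
def outDir : Tile → Dir → Option Dir
  | .vert, .north => some .north
  | .cross, .north => some .north
  | .se, .north => some .east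
  | .bump, .north => some .east
  | .horiz, .east => some .east
  | .cross, .east => some .east
  | .nw, .east => some .north
  | .bump, .east => some .north
  | _, _ => none

/-- Trace a pipe; returns the row in which it exits through the east edge of the grid. -/
def traceAux (g : Grid) : ℕ → ℕ → ℕ → Dir → Option ℕ
  | 0, _, _, _ => none
  | fuel + 1, x, y, d =>
    match outDir (g.tile x y) d with
    | none => none
    | some Dir.north => if x ≤ 1 then none else traceAux g fuel (x - 1) y Dir.north
    | some Dir.east => if g.n ≤ y then some x else traceAux g fuel x (y + 1) Dir.east

/-- The exit row of the pipe entering at the bottom of column `c`. -/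
def exitRow (g : Grid) (c : ℕ) : Option ℕ := traceAux g (2 * g.n + 2) g.n c Dir.north

/-- The list of states `(row, column, heading)` visited by a pipe. -/
def pathAux (g : Grid) : ℕ → ℕ → ℕ → Dir → List (ℕ × ℕ × Dir)
  | 0, _, _, _ => []
  | fuel + 1, x, y, d =>
    (x, y, d) ::
      (match outDir (g.tile x y) d with
       | none => []
       | some Dir.north => if x ≤ 1 then [] else pathAux g fuel (x - 1) y Dir.north
       | some Dir.east => if g.n ≤ y then [] else pathAux g fuel x (y + 1) Dir.east)

/-- The path of the pipe entering at the bottom of column `c`. -/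
def pipePath (g : Grid) (c : ℕ) : List (ℕ × ℕ × Dir) := pathAux g (2 * g.n + 2) g.n c Dir.north

/-- Pipe `c` passes through position `z`. -/
def passes (g : Grid) (c : ℕ) (z : ℕ × ℕ) : Prop :=
  ∃ d : Dir, (z.1, z.2, d) ∈ pipePath g c

def InGrid (g : Grid) (i j : ℕ) : Prop := 1 ≤ i ∧ i ≤ g.n ∧ 1 ≤ j ∧ j ≤ g.n

/-- A (reduced) bumpless pipe dream: tiles match along edges; pipes enter along the
bottom and exit along the right; no bump tiles; no two pipes cross more than once.
(Tiles outside the grid are normalized to `horiz`.) -/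
def IsBPD (g : Grid) : Prop :=
  1 ≤ g.n ∧
  (∀ i j, ¬ InGrid g i j → g.tile i j = Tile.horiz) ∧
  (∀ i j, InGrid g i j → g.tile i j ≠ Tile.bump) ∧
  (∀ i j, 1 ≤ i → i < g.n → 1 ≤ j → j ≤ g.n → hasS (g.tile i j) = hasN (g.tile (i + 1) j)) ∧
  (∀ i j, 1 ≤ i → i ≤ g.n → 1 ≤ j → j < g.n → hasE (g.tile i j) = hasW (g.tile i (j + 1))) ∧
  (∀ j, 1 ≤ j → j ≤ g.n → hasN (g.tile 1 j) = false) ∧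
  (∀ j, 1 ≤ j → j ≤ g.n → hasS (g.tile g.n j) = true) ∧
  (∀ i, 1 ≤ i → i ≤ g.n → hasW (g.tile i 1) = false) ∧
  (∀ i, 1 ≤ i → i ≤ g.n → hasE (g.tile i g.n) = true) ∧
  (∀ c c', 1 ≤ c → c ≤ g.n → 1 ≤ c' → c' ≤ g.n → c ≠ c' →
    Set.Subsingleton {z : ℕ × ℕ | g.tile z.1 z.2 = Tile.cross ∧ passes g c z ∧ passes g c' z})

/-- `g ∈ BPD(w)`: `g` is a bumpless pipe dream whose permutation is `w`, i.e. the pipe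
entering at the bottom of column `c` exits to the right in row `w⁻¹(c)`. -/
def MemBPD (w : Perm') (g : Grid) : Prop :=
  IsBPD g ∧ w 0 = 0 ∧ (∀ k, g.n < k → w k = k) ∧
  (∀ c, 1 ≤ c → c ≤ g.n → exitRow g c = some (w.symm c))

/-! ### Weigandt's map γ -/

/-- The blank tiles on the diagonal `{(i,j) : j - i = d}`, from northwest to southeast. -/
def blanksOnDiag (g : Grid) (d : ℤ) : List (ℕ × ℕ) :=
  (List.range' 1 g.n).filterMap (fun (i : ℕ) =>
    let jz : ℤ := (i : ℤ) + d
    if 1 ≤ jz ∧ jz ≤ (g.n : ℤ) then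
      (if g.tile i jz.toNat = Tile.blank then some (i, jz.toNat) else none)
    else none)

/-- The number of pipes passing above position `(i,j)`: tiles above it in column `j`
in which a pipe travels eastward. -/
def pipesAbove (g : Grid) (i j : ℕ) : ℕ :=
  ((List.range' 1 g.n).filter (fun x => decide (x < i) && hasE (g.tile x j))).length

/-- Weigandt's map `γ` (for vexillary permutations): fill each blank tile with the number
of pipes above it, slide the filled tiles northwest along their diagonals into the Young
diagram of `lam`, and add `i` to every entry in row `i`. -/
def weigandt (g : Grid) (lam : List ℕ) : List (List ℕ) :=
  (List.range lam.length).map (fun (r0 : ℕ) =>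
    (List.range (lam.getD r0 0)).map (fun (c0 : ℕ) =>
      let r : ℕ := r0 + 1
      let c : ℕ := c0 + 1
      let p := (blanksOnDiag g ((c : ℤ) - (r : ℤ))).getD (min r c - 1) (0, 0)
      pipesAbove g p.1 p.2 + r))

/-! ### The Gao–Huang operator ∇, pop, and the bijection φ -/

/-- Backward tracing: enter tile `(x,y)` through its north edge (`viaN = true`) or its
east edge (`viaN = false`) and follow the pipe backwards; returns the bottom column
at which the pipe enters the grid. -/
def backAux (g : Grid) : ℕ → ℕ → ℕ → Bool → Option ℕ
  | 0, _, _, _ => none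
  | fuel + 1, x, y, viaN =>
    if g.n < x then none
    else if viaN then
      match g.tile x y with
      | .vert | .cross => if x = g.n then some y else backAux g fuel (x + 1) y true
      | .nw | .bump => backAux g fuel x (y - 1) false
      | _ => none
    else
      match g.tile x y with
      | .horiz | .cross => backAux g fuel x (y - 1) false
      | .se | .bump => if x = g.n then some y else backAux g fuel (x + 1) y true
      | _ => none

/-- The label of the pipe passing through `(x,y)` entering from the south. -/
def pipeFromS (g : Grid) (x y : ℕ) : Option ℕ :=
  if x = g.n then some y else backAux g (2 * g.n + 2) (x + 1) y true

/-- Move the mark east to the rightmost blank tile in its contiguous block of blanks. -/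
def slideEast (g : Grid) (i j : ℕ) : ℕ :=
  ((List.range' j (g.n + 1)).takeWhile (fun y => g.tile i y == Tile.blank)).getLastD j

/-- Tile rewrite for the undroop of the pipe `p` (from `(i', j+1)` into `(i, j)`)
performed in one iteration of the Gao–Huang procedure; the `(i', j+1)` case `cross → se`
is the final uncrossing step. -/
def nablaUndroop (T : ℕ → ℕ → Tile) (i i' j : ℕ) : ℕ → ℕ → Tile := fun x y =>
  let t := T x y
  if x = i ∧ y = j then (match t with | Tile.blank => Tile.se | _ => t)
  else if x = i' ∧ y = j then
    (match t with | Tile.se => Tile.vert | Tile.horiz => Tile.nw | _ => t)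
  else if x = i ∧ y = j + 1 then
    (match t with | Tile.se => Tile.horiz | Tile.vert => Tile.nw | _ => t)
  else if x = i' ∧ y = j + 1 then
    (match t with | Tile.nw => Tile.blank | Tile.cross => Tile.se | _ => t)
  else if y = j ∧ i < x ∧ x < i' then
    (match t with | Tile.blank => Tile.vert | Tile.horiz => Tile.cross | _ => t)
  else if y = j + 1 ∧ i < x ∧ x < i' then
    (match t with | Tile.vert => Tile.blank | Tile.cross => Tile.horiz | _ => t)
  else t

/-- Tile rewrite for the droop (from `(k, j)` into `(k', j+1)`) of a pipe `q` having both
a ⌐-turn and a ⌟-turn in column `j`, performed after the undroop of `p`. -/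
def nablaQDroop (T : ℕ → ℕ → Tile) (k k' j : ℕ) : ℕ → ℕ → Tile := fun x y =>
  let t := T x y
  if x = k ∧ y = j then (match t with | Tile.se => Tile.vert | _ => t)
  else if x = k' ∧ y = j then (match t with | Tile.nw => Tile.cross | _ => t)
  else if x = k ∧ y = j + 1 then (match t with | Tile.horiz => Tile.se | _ => t)
  else if x = k' ∧ y = j + 1 then (match t with | Tile.blank => Tile.nw | _ => t)
  else if y = j + 1 ∧ k < x ∧ x < k' then
    (match t with | Tile.blank => Tile.vert | Tile.horiz => Tile.cross | _ => t)
  else t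

/-- The ⌐/⌟ elbow pairs `(k, k')` of pipes in column `j` strictly between rows `i` and `i'`. -/
def qPairs (g : Grid) (i i' j : ℕ) : List (ℕ × ℕ) :=
  (List.range' 1 g.n).filterMap (fun k =>
    if i < k ∧ k < i' ∧ g.tile k j = Tile.se then
      match (List.range' 1 g.n).find?
          (fun k' => decide (k < k' ∧ k' < i' ∧ g.tile k' j = Tile.nw)) with
      | some k' => some (k, k')
      | none => none
    else none)

/-- One iteration of the marked-tile procedure on the rectangle with corners
`(i, j)` and `(i', j+1)`: undroop `p`, then droop the intersecting pipes. -/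
def nablaIter (g : Grid) (i i' j : ℕ) : Grid :=
  ⟨g.n, (qPairs g i i' j).foldl (fun T kk => nablaQDroop T kk.1 kk.2 j)
    (nablaUndroop g.tile i i' j)⟩

/-- The marked-tile loop of the Gao–Huang procedure; returns `(∇B, a)`. -/
def nablaLoop (g : Grid) : ℕ → ℕ × ℕ → Grid × ℕ
  | 0, _ => (g, 0)
  | fuel + 1, (i, j0) =>
    let j := slideEast g i j0
    match pipeFromS g i (j + 1) with
    | none => (g, 0)
    | some p =>
      if p = j + 1 then
        match (List.range' 1 g.n).find? (fun x =>
            decide (i < x) && (g.tile x (j + 1) == Tile.cross) &&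
            (backAux g (2 * g.n + 2) x (j + 1) false == some j)) with
        | some i' => (nablaIter g i i' j, j)
        | none => (g, 0)
      else
        match (List.range' 1 g.n).find? (fun x =>
            decide (i < x) && (g.tile x (j + 1) == Tile.nw)) with
        | some i' => nablaLoop (nablaIter g i i' j) fuel (i', j + 1)
        | none => (g, 0)

/-- The Gao–Huang procedure: returns `(∇B, (r, a))` where `pop(B) = (r, a)`. -/
def nablaPop (g : Grid) : Grid × ℕ × ℕ :=
  match (List.range' 1 g.n).find?
      (fun i => (List.range' 1 g.n).any (fun j => g.tile i j == Tile.blank)) with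
  | none => (g, 0, 0)
  | some r =>
    let j0 := ((List.range' 1 g.n).filter (fun j => g.tile r j == Tile.blank)).getLastD 0
    let res := nablaLoop g (g.n + 1) (r, j0)
    (res.1, r, res.2)

/-- The Gao–Huang operator `∇`. -/
def nabla (g : Grid) : Grid := (nablaPop g).1

/-- `pop(B) = (r, a)`. -/
def pop (g : Grid) : ℕ × ℕ := (nablaPop g).2

/-- The number of crossing tiles of `g` (which equals `ℓ(w)` for `g ∈ BPD(w)`). -/
def crossCount (g : Grid) : ℕ :=
  ((List.range' 1 g.n).map (fun i =>
    ((List.range' 1 g.n).filter (fun j => g.tile i j == Tile.cross)).length)).sum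

def phiAux : ℕ → Grid → List (ℕ × ℕ)
  | 0, _ => []
  | l + 1, g => pop g :: phiAux l (nabla g)

/-- The Gao–Huang bijection `φ : BPD(w) → PD(w)`,
`φ(B) = (r_1,…,r_l ; a_1,…,a_l)` with `(r_i, a_i) = pop(∇^{i-1} B)`. -/
def phi (g : Grid) : Biword :=
  ⟨(phiAux (crossCount g) g).map Prod.fst, (phiAux (crossCount g) g).map Prod.snd⟩

/-! ### Little bumps (relational) -/

/-- The reflection labelling the crossing at position `m` (0-indexed) of the word `a`:
deleting the letter at position `m` from `a` yields a word for `wordProd a * crossingRefl a m`.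
The wires `i` and `j` cross at position `m` iff `crossingRefl a m = t_{ij}`. -/
def crossingRefl (a : List ℕ) (m : ℕ) : Perm' :=
  (wordProd (a.drop (m + 1)))⁻¹ * sT (a.getD m 0) * wordProd (a.drop (m + 1))

/-- `a` is a reduced word (for its own product). -/
def IsReducedSelf (a : List ℕ) : Prop := IsReducedWord (wordProd a) a

/-- Increment the entry of `a` at position `m`. -/
def incrAt (a : List ℕ) (m : ℕ) : List ℕ := a.set m (a.getD m 0 + 1)

/-- The (upward) Little bump `L_{ij}` as a relation on biwords: starting at the position
`m_1` where wires `i` and `j` cross, repeatedly increment the current entry; stop when the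
bottom word becomes reduced, and otherwise move to the unique other position whose crossing
involves the same pair of wires. -/
def LittleBumpRel (i j : ℕ) (P P' : Biword) : Prop :=
  P'.top = P.top ∧
  ∃ ms : List ℕ, ∃ ws : List (List ℕ),
    ms ≠ [] ∧
    ws.length = ms.length + 1 ∧
    ws.getD 0 [] = P.bot ∧
    ws.getLastD [] = P'.bot ∧
    (∀ t : ℕ, t < ms.length → ws.getD (t + 1) [] = incrAt (ws.getD t []) (ms.getD t 0)) ∧
    crossingRefl P.bot (ms.getD 0 0) = tT i j ∧
    (∀ t : ℕ, t + 1 < ms.length →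
      ¬ IsReducedSelf (ws.getD (t + 1) []) ∧
      ms.getD (t + 1) 0 ≠ ms.getD t 0 ∧
      crossingRefl (ws.getD (t + 1) []) (ms.getD t 0)
        = crossingRefl (ws.getD (t + 1) []) (ms.getD (t + 1) 0)) ∧
    IsReducedSelf P'.bot

/-! ### Huang bumps -/

/-- Least offset `t ≥ 1` satisfying `p` (searched up to `bound + 1`). -/
def leastOff (p : ℕ → Bool) (bound : ℕ) : ℕ :=
  ((List.range' 1 (bound + 1)).filter p).headD 1

/-- The southeast corner `(x + k, y + l)` of the min-droop at `(x, y)`: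
`k, l ≥ 1` minimal with `(x+k, y)` and `(x, y+l)` not crossing tiles. -/
def minDroopCorner (g : Grid) (x y : ℕ) : ℕ × ℕ :=
  (x + leastOff (fun k => !(g.tile (x + k) y == Tile.cross)) g.n,
   y + leastOff (fun l => !(g.tile x (y + l) == Tile.cross)) g.n)

/-- The min-droop at `(x, y)`: droop the ⌐-turn at `(x, y)` into `(x+k, y+l)`. -/
def minDroopT (g : Grid) (x y : ℕ) : Grid :=
  let k := leastOff (fun k => !(g.tile (x + k) y == Tile.cross)) g.n
  let l := leastOff (fun l => !(g.tile x (y + l) == Tile.cross)) g.n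
  ⟨g.n, fun a b =>
    let t := g.tile a b
    if a = x ∧ b = y then
      (match t with | Tile.se => Tile.blank | Tile.bump => Tile.nw | _ => t)
    else if a = x + k ∧ b = y then (match t with | Tile.vert => Tile.se | _ => t)
    else if a = x ∧ b = y + l then
      (match t with | Tile.horiz => Tile.se | Tile.nw => Tile.vert | _ => t)
    else if a = x + k ∧ b = y + l then
      (match t with | Tile.blank => Tile.nw | Tile.se => Tile.bump | _ => t)
    else if b = y ∧ x < a ∧ a < x + k then
      (match t with | Tile.cross => Tile.horiz | Tile.vert => Tile.blank | _ => t)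
    else if a = x ∧ y < b ∧ b < y + l then
      (match t with | Tile.cross => Tile.vert | Tile.horiz => Tile.blank | _ => t)
    else if a = x + k ∧ y < b ∧ b < y + l then
      (match t with | Tile.blank => Tile.horiz | Tile.vert => Tile.cross | _ => t)
    else if b = y + l ∧ x < a ∧ a < x + k then
      (match t with | Tile.blank => Tile.vert | Tile.horiz => Tile.cross | _ => t)
    else t⟩

/-- Replace a single tile. -/
def setTile (g : Grid) (x y : ℕ) (t : Tile) : Grid :=
  ⟨g.n, fun a b => if a = x ∧ b = y then t else g.tile a b⟩

/-- Pipe `c` passes through `(x, y)` (Boolean). -/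
def onPath (g : Grid) (c : ℕ) (x y : ℕ) : Bool :=
  decide ((x, y, Dir.north) ∈ pipePath g c) || decide ((x, y, Dir.east) ∈ pipePath g c)

/-- The position of the crossing tile where pipes `c` and `c'` cross, if any. -/
def findCrossing (g : Grid) (c c' : ℕ) : Option (ℕ × ℕ) :=
  (pipePath g c).findSome? (fun s =>
    if (g.tile s.1 s.2.1 == Tile.cross) && onPath g c' s.1 s.2.1 then some (s.1, s.2.1)
    else none)

/-- The column of the ⌐-turn of pipe `c` in row `row`, if any. -/
def seTurnCol (g : Grid) (c row : ℕ) : Option ℕ :=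
  (pipePath g c).findSome? (fun s =>
    if s.1 = row ∧ s.2.2 = Dir.north ∧
        (g.tile s.1 s.2.1 = Tile.se ∨ g.tile s.1 s.2.1 = Tile.bump) then some s.2.1
    else none)

/-- The iteration of the Huang bump: min-droops and cross-bump-swaps until a bump tile
is turned into a crossing tile. -/
def huangLoop (iPipe : ℕ) : ℕ → Grid → ℕ × ℕ → Grid
  | 0, g, _ => g
  | fuel + 1, g, (x, y) =>
    let c := minDroopCorner g x y
    let g1 := minDroopT g x y
    match g1.tile c.1 c.2 with
    | Tile.nw =>
      match seTurnCol g1 iPipe c.1 with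
      | some col => huangLoop iPipe fuel g1 (c.1, col)
      | none => g1
    | Tile.bump =>
      match backAux g1 (2 * g1.n + 2) c.1 c.2 false with
      | some q =>
        match findCrossing g1 iPipe q with
        | some z =>
          huangLoop iPipe fuel (setTile (setTile g1 c.1 c.2 Tile.cross) z.1 z.2 Tile.bump) z
        | none => setTile g1 c.1 c.2 Tile.cross
      | none => g1
    | _ => g1

/-- Fuel exceeding the number of states of the procedure. -/
def huangFuel (g : Grid) : ℕ := 7 ^ (g.n * g.n) * (g.n * g.n) + 2

/-- The Huang bump `H_{ij}`: replace the crossing of pipes `i` and `j` by a bump tile,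
then repeatedly min-droop and cross-bump-swap until a new crossing tile is created. -/
def huang (i j : ℕ) (g : Grid) : Grid :=
  match findCrossing g i j with
  | some z => huangLoop i (huangFuel g) (setTile g z.1 z.2 Tile.bump) z
  | none => g


/-! A pipe is a lattice path going up or right, so each step moves it from one diagonal
`col - row` to the next, and two pipes can be compared row by row along common diagonals.
If pipes `m < M` met but `M` exited below `m`, then `M` would lie weakly below `m` on the first
diagonal it visits (it enters on the bottom row) and on the last one (where it exits), while at
their meeting point, which is a crossing, `M` is strictly above `m` on a neighbouring diagonal.
By discrete continuity the pipes would meet a second time, which a reduced bumpless pipe dream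
forbids. So the two pipes through a crossing `(x, y)` form an inversion `m < M ≤ y`,
`v⁻¹ M < v⁻¹ m ≤ x`. If `(x, y) ∈ Y_{ρ(v)}`, there is a box `(r, v j)` of `D_v` with `x ≤ r`
and `y ≤ v j`, and `v⁻¹ M < v⁻¹ m < r < j` is a `2143` pattern. -/

theorem exists_eq_zero_of_abs_sub_le_one {D : ℕ → ℤ} {a b : ℕ} (hab : a ≤ b)
    (hD : ∀ k, a ≤ k → k < b → |D (k + 1) - D k| ≤ 1) (ha : D a ≤ 0) (hb : 0 ≤ D b) :
    ∃ k, a ≤ k ∧ k ≤ b ∧ D k = 0 := by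
  induction b, hab using Nat.le_induction with
  | base => exact ⟨a, le_rfl, le_rfl, le_antisymm ha hb⟩
  | succ b hab ih =>
    by_cases hb' : 0 ≤ D b
    · obtain ⟨k, h1, h2, h3⟩ := ih (fun k h1 h2 => hD k h1 (by omega)) hb'
      exact ⟨k, h1, by omega, h3⟩
    · have := abs_le.1 (hD b hab (by omega))
      exact ⟨b + 1, by omega, le_rfl, by omega⟩

theorem exists_rothe_of_le_rhoRow {v : Perm'} (hv : IsPerm v) {x y : ℕ} (hy : 1 ≤ y)
    (h : y ≤ rhoRow v x) : ∃ r j, x ≤ r ∧ r < j ∧ v j < v r ∧ y ≤ v j := by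
  set S := {c : ℕ | ∃ r : ℕ, x ≤ r ∧ (r, c) ∈ RotheDiagram v}
  have hρ : rhoRow v x = sSup S := rfl
  have hne : S.Nonempty := by
    by_contra hempty
    rw [Set.not_nonempty_iff_eq_empty] at hempty
    rw [hρ, hempty, csSup_empty] at h
    exact absurd h (by simp; omega)
  have hbdd : BddAbove S := by
    obtain ⟨B, hB⟩ := (hv.2.image v).bddAbove
    refine ⟨B, ?_⟩
    rintro c ⟨r, -, -, j, hrj, hjr, hc⟩
    simp only at hrj hjr hc
    subst hc
    by_cases hj : v j = j
    · have hr : v r ≠ r := fun hr => by omega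
      exact hjr.le.trans (hB ⟨r, hr, rfl⟩)
    · exact hB ⟨j, hj, rfl⟩
  obtain ⟨r, hxr, -, j, hrj, hjr, hc⟩ := Nat.sSup_mem hne hbdd
  exact ⟨r, j, hxr, hrj, hjr, hc ▸ hρ ▸ h⟩

theorem Vexillary.symm_lt_symm {v : Perm'} (hv : Vexillary v) {m M r j : ℕ} (hmM : m < M)
    (hm : v.symm m ≤ r) (hrj : r < j) (hjr : v j < v r) (hMj : M ≤ v j) :
    v.symm m < v.symm M := by
  by_contra! hle
  have hlt : v.symm M < v.symm m := hle.lt_of_ne (v.symm.injective.ne hmM.ne')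
  have hM0 : v.symm M ≠ 0 := fun h => by
    have := v.apply_symm_apply M
    rw [h, hv.1.1] at this
    omega
  have hmr : v.symm m ≠ r := fun h => by
    have := v.apply_symm_apply m
    rw [h] at this
    omega
  have hMj' : v.symm M ≠ j := by omega
  refine hv.2 ⟨v.symm M, v.symm m, r, j, by omega, hlt, by omega, hrj, ?_, ?_, hjr⟩
  · simpa using hmM
  · rw [Equiv.apply_symm_apply]
    exact hMj.lt_of_ne fun h => hMj' (by rw [h, Equiv.symm_apply_apply])

theorem Tile.eq_cross_of_outDir {t : Tile} (hN : outDir t .north ≠ none)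
    (hE : outDir t .east ≠ none) (ht : t ≠ .bump) : t = .cross := by
  cases t <;> simp_all [outDir]

theorem hasS_of_outDir_north {t : Tile} (h : outDir t .north ≠ none) : hasS t = true := by
  cases t <;> simp_all [outDir, hasS]

theorem hasW_of_outDir_east {t : Tile} (h : outDir t .east ≠ none) : hasW t = true := by
  cases t <;> simp_all [outDir, hasW]

theorem exists_outDir_eq_north {t : Tile} (h : hasN t = true) :
    ∃ d, outDir t d = some .north := by
  cases t <;> simp_all [outDir, hasN] <;> first | exact ⟨.north, rfl⟩ | exact ⟨.east, rfl⟩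

theorem exists_outDir_eq_east {t : Tile} (h : hasE t = true) :
    ∃ d, outDir t d = some .east := by
  cases t <;> simp_all [outDir, hasE] <;> first | exact ⟨.north, rfl⟩ | exact ⟨.east, rfl⟩

/-- One step of `pathAux` and `traceAux`. -/
def nextState (g : Grid) (s : ℕ × ℕ × Dir) : Option (ℕ × ℕ × Dir) :=
  match outDir (g.tile s.1 s.2.1) s.2.2 with
  | some .north => if s.1 ≤ 1 then none else some (s.1 - 1, s.2.1, .north)
  | some .east => if g.n ≤ s.2.1 then none else some (s.1, s.2.1 + 1, .east)
  | none => none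

def diagIndex (s : ℕ × ℕ × Dir) : ℤ := (s.2.1 : ℤ) - s.1

section NextState

variable {g : Grid} {s t : ℕ × ℕ × Dir}

theorem nextState_eq_some :
    nextState g s = some t ↔
      (outDir (g.tile s.1 s.2.1) s.2.2 = some .north ∧ 1 < s.1 ∧ t = (s.1 - 1, s.2.1, .north)) ∨
      (outDir (g.tile s.1 s.2.1) s.2.2 = some .east ∧ s.2.1 < g.n ∧
        t = (s.1, s.2.1 + 1, .east)) := by
  unfold nextState
  rcases outDir (g.tile s.1 s.2.1) s.2.2 with _ | _ | _ <;> simp only [] <;> (try split_ifs) <;>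
    simp [eq_comm] <;> omega

theorem diagIndex_of_nextState (h : nextState g s = some t) : diagIndex t = diagIndex s + 1 := by
  rcases nextState_eq_some.1 h with ⟨-, hs, rfl⟩ | ⟨-, -, rfl⟩ <;> simp [diagIndex] <;> omega

theorem row_le_of_nextState (h : nextState g s = some t) : t.1 ≤ s.1 ∧ s.1 ≤ t.1 + 1 := by
  rcases nextState_eq_some.1 h with ⟨-, h, rfl⟩ | ⟨-, -, rfl⟩ <;> simp
  omega

theorem row_add_one_of_nextState_north (h : nextState g s = some t) (ht : t.2.2 = .north) :
    t.1 + 1 = s.1 := by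
  rcases nextState_eq_some.1 h with ⟨-, hs, rfl⟩ | ⟨-, -, rfl⟩
  · simp
    omega
  · cases ht

theorem row_of_nextState_east (h : nextState g s = some t) (ht : t.2.2 = .east) : t.1 = s.1 := by
  rcases nextState_eq_some.1 h with ⟨-, -, rfl⟩ | ⟨-, -, rfl⟩
  · cases ht
  · rfl

end NextState

theorem pathAux_succ (g : Grid) (f x y : ℕ) (d : Dir) :
    pathAux g (f + 1) x y d =
      (x, y, d) :: (nextState g (x, y, d)).elim [] fun s => pathAux g f s.1 s.2.1 s.2.2 := by
  simp only [pathAux, nextState]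
  split <;> (try split) <;> simp_all

theorem isChain_pathAux (g : Grid) (f x y : ℕ) (d : Dir) :
    (pathAux g f x y d).IsChain (fun s t => nextState g s = some t) := by
  induction f generalizing x y d with
  | zero => simp [pathAux]
  | succ f ih =>
    rw [pathAux_succ]
    rcases h : nextState g (x, y, d) with _ | ⟨x', y', d'⟩
    · simp
    · refine (ih x' y' d').cons ?_
      cases f <;> simp [pathAux, h]

theorem getLast?_pathAux_of_traceAux {g : Grid} {f x y e : ℕ} {d : Dir}
    (h : traceAux g f x y d = some e) :
    ∃ s, (pathAux g f x y d).getLast? = some s ∧ s.1 = e ∧ g.n ≤ s.2.1 ∧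
      outDir (g.tile s.1 s.2.1) s.2.2 = some .east := by
  induction f generalizing x y d with
  | zero => simp [traceAux] at h
  | succ f ih =>
    rw [pathAux_succ]
    simp only [traceAux] at h
    rcases hod : outDir (g.tile x y) d with _ | _ | _ <;> simp only [hod] at h
    · cases h
    · split_ifs at h with hx
      obtain ⟨s, hs, hse⟩ := ih h
      have hnext : nextState g (x, y, d) = some (x - 1, y, .north) := by simp [nextState, hod, hx]
      simpa [hnext, List.getLast?_cons, hs] using hse
    · split_ifs at h with hy
      · have hnext : nextState g (x, y, d) = none := by simp [nextState, hod, hy]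
        exact ⟨(x, y, d), by simp [hnext], Option.some.inj h, hy, hod⟩
      · obtain ⟨s, hs, hse⟩ := ih h
        have hnext : nextState g (x, y, d) = some (x, y + 1, .east) := by
          simp [nextState, hod, hy]
        simpa [hnext, List.getLast?_cons, hs] using hse

/-- The `k`-th state of pipe `c`; a junk value past the end of the pipe. -/
def pipeState (g : Grid) (c k : ℕ) : ℕ × ℕ × Dir := (pipePath g c).getD k (0, 0, .north)

section Pipe

variable {g : Grid} {c e k : ℕ}

theorem pipePath_eq_cons (g : Grid) (c : ℕ) :
    pipePath g c = (g.n, c, .north) ::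
      (nextState g (g.n, c, .north)).elim [] fun s => pathAux g (2 * g.n + 1) s.1 s.2.1 s.2.2 :=
  pathAux_succ _ _ _ _ _

theorem pipeState_zero : pipeState g c 0 = (g.n, c, .north) := by
  simp [pipeState, pipePath_eq_cons]

theorem length_pipePath_pos : 0 < (pipePath g c).length := by
  simp [pipePath_eq_cons]

theorem pipeState_mem (hk : k < (pipePath g c).length) : pipeState g c k ∈ pipePath g c := by
  rw [pipeState, List.getD_eq_getElem _ _ hk]
  exact List.getElem_mem hk

theorem mem_pipePath_iff {s : ℕ × ℕ × Dir} :
    s ∈ pipePath g c ↔ ∃ k < (pipePath g c).length, pipeState g c k = s := by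
  rw [List.mem_iff_getElem]
  refine exists_congr fun k => ⟨fun ⟨hk, h⟩ => ⟨hk, ?_⟩, fun ⟨hk, h⟩ => ⟨hk, ?_⟩⟩ <;>
    rwa [pipeState, List.getD_eq_getElem _ _ hk] at *

theorem nextState_pipeState (hk : k + 1 < (pipePath g c).length) :
    nextState g (pipeState g c k) = some (pipeState g c (k + 1)) := by
  rw [pipeState, pipeState, List.getD_eq_getElem _ _ hk, List.getD_eq_getElem _ _ (by omega)]
  exact (isChain_pathAux g _ _ _ _).getElem k hk

theorem diagIndex_pipeState (hk : k < (pipePath g c).length) :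
    diagIndex (pipeState g c k) = (c : ℤ) - g.n + k := by
  induction k with
  | zero => simp [pipeState_zero, diagIndex]
  | succ k ih =>
    rw [diagIndex_of_nextState (nextState_pipeState hk), ih (by omega)]
    push_cast
    ring

theorem eq_of_mem_pipePath {s t : ℕ × ℕ × Dir} (hs : s ∈ pipePath g c) (ht : t ∈ pipePath g c)
    (h : diagIndex s = diagIndex t) : s = t := by
  obtain ⟨k, hk, rfl⟩ := mem_pipePath_iff.1 hs
  obtain ⟨k', hk', rfl⟩ := mem_pipePath_iff.1 ht
  rw [diagIndex_pipeState hk, diagIndex_pipeState hk'] at h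
  rw [show k = k' by omega]

theorem pipeState_row_le {j : ℕ} (hkj : k ≤ j) (hj : j < (pipePath g c).length) :
    (pipeState g c j).1 ≤ (pipeState g c k).1 := by
  induction j, hkj using Nat.le_induction with
  | base => rfl
  | succ j hkj ih =>
    exact (row_le_of_nextState (nextState_pipeState hj)).1.trans (ih (by omega))

theorem mem_pipePath_bounds (hc : c ≤ g.n) {s : ℕ × ℕ × Dir} (hs : s ∈ pipePath g c) :
    s.1 ≤ g.n ∧ c ≤ s.2.1 ∧ s.2.1 ≤ g.n ∧ (s.2.2 = .east → c < s.2.1) := by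
  refine (isChain_pathAux g _ _ _ _).induction
    (fun s => s.1 ≤ g.n ∧ c ≤ s.2.1 ∧ s.2.1 ≤ g.n ∧ (s.2.2 = .east → c < s.2.1)) _ ?_ ?_ s hs
  · rintro s t hst ⟨h1, h2, h3, h4⟩
    rcases nextState_eq_some.1 hst with ⟨-, -, rfl⟩ | ⟨-, h, rfl⟩ <;> simp <;> omega
  · simp [pathAux_succ, hc]

theorem pipeState_last (hc : c ≤ g.n) (he : exitRow g c = some e) :
    ∃ d, pipeState g c ((pipePath g c).length - 1) = (e, g.n, d) ∧
      outDir (g.tile e g.n) d = some .east := by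
  obtain ⟨s, hs, rfl, hsn, hso⟩ := getLast?_pathAux_of_traceAux he
  have hlast : pipeState g c ((pipePath g c).length - 1) = s := by
    rw [List.getLast?_eq_getElem?] at hs
    simp [pipeState, List.getD_eq_getElem?_getD, pipePath, hs]
  have hcol : s.2.1 = g.n := le_antisymm (mem_pipePath_bounds hc (hlast ▸ pipeState_mem
    (Nat.sub_lt length_pipePath_pos one_pos))).2.2.1 hsn
  exact ⟨s.2.2, by rw [hlast, ← hcol], by rwa [← hcol]⟩

theorem length_pipePath (hc : c ≤ g.n) (he : exitRow g c = some e) :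
    (pipePath g c).length + c + e = 2 * g.n + 1 := by
  obtain ⟨d, hlast, -⟩ := pipeState_last hc he
  have h := diagIndex_pipeState (g := g) (c := c) (Nat.sub_lt length_pipePath_pos one_pos)
  rw [hlast, diagIndex] at h
  have := (length_pipePath_pos (g := g) (c := c))
  push_cast [Nat.cast_sub (Nat.one_le_iff_ne_zero.2 this.ne')] at h
  omega

theorem nextState_pipeState_eq_none_iff (hc : c ≤ g.n) (he : exitRow g c = some e)
    (hk : k < (pipePath g c).length) :
    nextState g (pipeState g c k) = none ↔ k + 1 = (pipePath g c).length := by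
  refine ⟨fun h => ?_, fun h => ?_⟩
  · by_contra hne
    simp [nextState_pipeState (lt_of_le_of_ne hk hne)] at h
  · obtain ⟨d, hlast, hout⟩ := pipeState_last hc he
    rw [show k = (pipePath g c).length - 1 by omega, hlast]
    simp [nextState, hout]

theorem succ_lt_length_of_outDir_north (hc : c ≤ g.n) (he : exitRow g c = some e)
    (hk : k < (pipePath g c).length)
    (h : outDir (g.tile (pipeState g c k).1 (pipeState g c k).2.1) (pipeState g c k).2.2 =
      some .north) :
    k + 1 < (pipePath g c).length := by
  by_contra hk1
  obtain ⟨d, hlast, hout⟩ := pipeState_last hc he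
  rw [show k = (pipePath g c).length - 1 by omega, hlast] at h
  simp [hout] at h

theorem mem_pipePath_of_nextState (hc : c ≤ g.n) (he : exitRow g c = some e)
    {s t : ℕ × ℕ × Dir} (hs : s ∈ pipePath g c) (hst : nextState g s = some t) :
    t ∈ pipePath g c := by
  obtain ⟨k, hk, rfl⟩ := mem_pipePath_iff.1 hs
  have hk1 : k + 1 < (pipePath g c).length := by
    by_contra h
    rw [(nextState_pipeState_eq_none_iff hc he hk).2 (by omega)] at hst
    cases hst
  rw [nextState_pipeState hk1, Option.some_inj] at hst
  exact hst ▸ pipeState_mem hk1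

theorem exit_le_row (hc : c ≤ g.n) (he : exitRow g c = some e) {s : ℕ × ℕ × Dir}
    (hs : s ∈ pipePath g c) : e ≤ s.1 := by
  obtain ⟨k, hk, rfl⟩ := mem_pipePath_iff.1 hs
  obtain ⟨d, hlast, -⟩ := pipeState_last hc he
  have hkl : k ≤ (pipePath g c).length - 1 := by omega
  simpa [hlast] using pipeState_row_le hkl (Nat.sub_lt length_pipePath_pos one_pos)

theorem outDir_ne_none_of_mem (hc : c ≤ g.n) (he : exitRow g c = some e) {s : ℕ × ℕ × Dir}
    (hs : s ∈ pipePath g c) : outDir (g.tile s.1 s.2.1) s.2.2 ≠ none := by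
  obtain ⟨k, hk, rfl⟩ := mem_pipePath_iff.1 hs
  by_cases hk1 : k + 1 < (pipePath g c).length
  · rcases nextState_eq_some.1 (nextState_pipeState hk1) with ⟨h, -⟩ | ⟨h, -⟩ <;> simp [h]
  · obtain ⟨d, hlast, hout⟩ := pipeState_last hc he
    rw [show k = (pipePath g c).length - 1 by omega, hlast]
    simp [hout]

theorem exit_eq_of_pipeState_eq {c' e' k' : ℕ} (hc : c ≤ g.n) (he : exitRow g c = some e)
    (hc' : c' ≤ g.n) (he' : exitRow g c' = some e') (hk : k < (pipePath g c).length)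
    (hk' : k' < (pipePath g c').length) (h : pipeState g c k = pipeState g c' k') : e = e' := by
  obtain ⟨j, hj⟩ := Nat.exists_eq_add_of_lt hk
  induction j generalizing k k' with
  | zero =>
    have hlast := (nextState_pipeState_eq_none_iff hc he hk).2 hj.symm
    rw [h, nextState_pipeState_eq_none_iff hc' he' hk'] at hlast
    obtain ⟨d, hd, -⟩ := pipeState_last hc he
    obtain ⟨d', hd', -⟩ := pipeState_last hc' he'
    rw [show k = (pipePath g c).length - 1 by omega, hd,
      show k' = (pipePath g c').length - 1 by omega, hd'] at h
    exact (Prod.ext_iff.1 h).1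
  | succ j ih =>
    have hk1 : k + 1 < (pipePath g c).length := by omega
    have hnext := nextState_pipeState hk1
    have hk1' : k' + 1 < (pipePath g c').length := by
      by_contra hne
      rw [h, (nextState_pipeState_eq_none_iff hc' he' hk').2 (by omega)] at hnext
      cases hnext
    rw [h, nextState_pipeState hk1', Option.some_inj] at hnext
    exact ih hk1 hk1' hnext.symm (by omega)

end Pipe

/-- Pipe `m` enters `M - m` diagonals before pipe `M`, so both states lie on one diagonal. -/
def rowGap (g : Grid) (m M k : ℕ) : ℤ :=
  ((pipeState g m (k + (M - m))).1 : ℤ) - (pipeState g M k).1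

section RowGap

variable {g : Grid} {m M k : ℕ}

theorem diagIndex_pipeState_shift (hmM : m ≤ M) (hkm : k + (M - m) < (pipePath g m).length)
    (hk : k < (pipePath g M).length) :
    diagIndex (pipeState g m (k + (M - m))) = diagIndex (pipeState g M k) := by
  rw [diagIndex_pipeState hkm, diagIndex_pipeState hk]
  push_cast [hmM]
  ring

theorem passes_of_rowGap_eq_zero (hmM : m ≤ M) (hkm : k + (M - m) < (pipePath g m).length)
    (hk : k < (pipePath g M).length) (h0 : rowGap g m M k = 0) :
    passes g m ((pipeState g M k).1, (pipeState g M k).2.1) := by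
  have hdiag := diagIndex_pipeState_shift hmM hkm hk
  have hrow : (pipeState g m (k + (M - m))).1 = (pipeState g M k).1 := by
    rw [rowGap] at h0
    omega
  have hcol : (pipeState g m (k + (M - m))).2.1 = (pipeState g M k).2.1 := by
    simp only [diagIndex] at hdiag
    omega
  refine ⟨(pipeState g m (k + (M - m))).2.2, ?_⟩
  rw [← hrow, ← hcol]
  exact pipeState_mem hkm

theorem abs_rowGap_succ_sub_le (hkm : k + 1 + (M - m) < (pipePath g m).length)
    (hk : k + 1 < (pipePath g M).length) :
    |rowGap g m M (k + 1) - rowGap g m M k| ≤ 1 := by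
  have h1 := row_le_of_nextState (nextState_pipeState (g := g) (c := m) (k := k + (M - m))
    (by omega))
  have h2 := row_le_of_nextState (nextState_pipeState hk)
  rw [abs_le, rowGap, rowGap, show k + 1 + (M - m) = k + (M - m) + 1 by omega]
  omega

theorem rowGap_zero_nonpos (hm : m ≤ g.n) (hlen : M - m < (pipePath g m).length) :
    rowGap g m M 0 ≤ 0 := by
  have := (mem_pipePath_bounds hm (pipeState_mem (by simpa using hlen))).1
  simp only [rowGap, pipeState_zero, zero_add]
  omega

theorem rowGap_pred_eq_one {x y : ℕ} (hkm : k + (M - m) < (pipePath g m).length)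
    (hk : k < (pipePath g M).length) (h : pipeState g m (k + (M - m)) = (x, y, .north))
    (h' : pipeState g M k = (x, y, .east)) :
    0 < k ∧ rowGap g m M (k - 1) = 1 := by
  obtain ⟨k, rfl⟩ : ∃ j, k = j + 1 := by
    refine Nat.exists_eq_add_one.2 (Nat.pos_of_ne_zero ?_)
    rintro rfl
    simp [pipeState_zero] at h'
  have hshift : k + (M - m) + 1 = k + 1 + (M - m) := by omega
  have hp := row_add_one_of_nextState_north
    (nextState_pipeState (g := g) (c := m) (k := k + (M - m)) (by omega)) (by rw [hshift, h])
  have hq := row_of_nextState_east (nextState_pipeState hk) (by rw [h'])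
  rw [hshift, h] at hp
  rw [h'] at hq
  simp only [add_tsub_cancel_right, rowGap, Nat.succ_pos, true_and]
  omega

theorem rowGap_succ_eq_one {x y : ℕ} (hcross : g.tile x y = .cross)
    (hkm : k + (M - m) + 1 < (pipePath g m).length) (hk : k + 1 < (pipePath g M).length)
    (h : pipeState g m (k + (M - m)) = (x, y, .east))
    (h' : pipeState g M k = (x, y, .north)) :
    rowGap g m M (k + 1) = 1 := by
  have hp := nextState_pipeState (g := g) (c := m) hkm
  have hq := nextState_pipeState hk
  rw [h, nextState_eq_some] at hp
  rw [h', nextState_eq_some] at hq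
  simp only [hcross, outDir] at hp hq
  rw [rowGap, show k + 1 + (M - m) = k + (M - m) + 1 by omega]
  grind

end RowGap

theorem IsBPD.tile_ne_bump {g : Grid} (hg : IsBPD g) (i j : ℕ) : g.tile i j ≠ .bump := by
  by_cases hij : InGrid g i j
  · exact hg.2.2.1 i j hij
  · simp [hg.2.1 i j hij]

section BPD

variable {v : Perm'} {g : Grid}

theorem MemBPD.exitRow_eq (hB : MemBPD v g) {c : ℕ} (hc1 : 1 ≤ c) (hc : c ≤ g.n) :
    exitRow g c = some (v.symm c) :=
  hB.2.2.2 c hc1 hc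

theorem MemBPD.exists_mem_pipePath (hB : MemBPD v g) {x y : ℕ} {d : Dir} (hx1 : 1 ≤ x)
    (hx : x ≤ g.n) (hy1 : 1 ≤ y) (hy : y ≤ g.n) (hd : outDir (g.tile x y) d ≠ none) :
    ∃ c, 1 ≤ c ∧ c ≤ g.n ∧ (x, y, d) ∈ pipePath g c := by
  obtain ⟨-, -, -, hSN, hEW, -, -, hleft, -, -⟩ := hB.1
  -- The pipe entering `(x, y)` comes from the tile below or to the left.
  suffices key : ∀ k x y d, y + g.n = k + x → 1 ≤ x → x ≤ g.n → 1 ≤ y → y ≤ g.n →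
      outDir (g.tile x y) d ≠ none → ∃ c, 1 ≤ c ∧ c ≤ g.n ∧ (x, y, d) ∈ pipePath g c from
    key (y + g.n - x) x y d (by omega) hx1 hx hy1 hy hd
  intro k
  induction k with
  | zero => intros; omega
  | succ k ih =>
    intro x y d hk hx1 hx hy1 hy hd
    cases d with
    | north =>
      rcases hx.lt_or_eq with hx | rfl
      · obtain ⟨d', hd'⟩ := exists_outDir_eq_north
          ((hSN x y hx1 hx hy1 hy).symm.trans (hasS_of_outDir_north hd))
        obtain ⟨c, hc1, hc, hmem⟩ := ih (x + 1) y d' (by omega) (by omega) hx hy1 hy (by simp [hd'])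
        refine ⟨c, hc1, hc, mem_pipePath_of_nextState hc (hB.exitRow_eq hc1 hc) hmem ?_⟩
        simp [nextState, hd']
        omega
      · exact ⟨y, hy1, hy, mem_pipePath_iff.2 ⟨0, length_pipePath_pos, pipeState_zero⟩⟩
    | east =>
      have hW := hasW_of_outDir_east hd
      obtain ⟨y, rfl⟩ : ∃ y', y = y' + 1 := ⟨y - 1, by omega⟩
      rcases Nat.eq_zero_or_pos y with rfl | hy0
      · simp [hleft x hx1 hx] at hW
      obtain ⟨d', hd'⟩ := exists_outDir_eq_east ((hEW x y hx1 hx hy0 (by omega)).trans hW)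
      obtain ⟨c, hc1, hc, hmem⟩ := ih x y d' (by omega) hx1 hx hy0 (by omega) (by simp [hd'])
      refine ⟨c, hc1, hc, mem_pipePath_of_nextState hc (hB.exitRow_eq hc1 hc) hmem ?_⟩
      simp [nextState, hd', show ¬ g.n ≤ y by omega]

theorem MemBPD.tile_eq_cross_of_mem (hB : MemBPD v g) {c c' x y : ℕ} {d d' : Dir}
    (hc1 : 1 ≤ c) (hc : c ≤ g.n) (hc1' : 1 ≤ c') (hc' : c' ≤ g.n) (hne : c ≠ c')
    (h : (x, y, d) ∈ pipePath g c) (h' : (x, y, d') ∈ pipePath g c') :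
    g.tile x y = .cross ∧ d ≠ d' := by
  have hdd : d ≠ d' := by
    rintro rfl
    obtain ⟨k, hk, hks⟩ := mem_pipePath_iff.1 h
    obtain ⟨k', hk', hks'⟩ := mem_pipePath_iff.1 h'
    exact hne <| v.symm.injective <| exit_eq_of_pipeState_eq hc (hB.exitRow_eq hc1 hc) hc'
      (hB.exitRow_eq hc1' hc') hk hk' (hks.trans hks'.symm)
  have ho := outDir_ne_none_of_mem hc (hB.exitRow_eq hc1 hc) h
  have ho' := outDir_ne_none_of_mem hc' (hB.exitRow_eq hc1' hc') h'
  refine ⟨Tile.eq_cross_of_outDir ?_ ?_ (hB.1.tile_ne_bump x y), hdd⟩ <;>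
    cases d <;> cases d' <;> simp_all

theorem MemBPD.eq_of_passes (hB : MemBPD v g) {c c' : ℕ} {z z' : ℕ × ℕ}
    (hc1 : 1 ≤ c) (hc : c ≤ g.n) (hc1' : 1 ≤ c') (hc' : c' ≤ g.n) (hne : c ≠ c')
    (hz : passes g c z) (hz' : passes g c' z) (hw : passes g c z') (hw' : passes g c' z') :
    z = z' := by
  obtain ⟨-, -, -, -, -, -, -, -, -, hsub⟩ := hB.1
  have hcross : ∀ {z}, passes g c z → passes g c' z → g.tile z.1 z.2 = .cross :=
    fun ⟨_, h⟩ ⟨_, h'⟩ => (hB.tile_eq_cross_of_mem hc1 hc hc1' hc' hne h h').1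
  exact hsub c c' hc1 hc hc1' hc' hne ⟨hcross hz hz', hz, hz'⟩ ⟨hcross hw hw', hw, hw'⟩

theorem MemBPD.rowGap_eq_one_of_meet (hB : MemBPD v g) {m M k x y : ℕ} {d d' : Dir}
    (hm1 : 1 ≤ m) (hmM : m < M) (hM : M ≤ g.n) (hlt : v.symm m < v.symm M)
    (hk : k < (pipePath g M).length) (h : pipeState g m (k + (M - m)) = (x, y, d))
    (h' : pipeState g M k = (x, y, d')) :
    (0 < k ∧ rowGap g m M (k - 1) = 1) ∨
      (k + 1 < (pipePath g M).length ∧ rowGap g m M (k + 1) = 1) := by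
  have hlp := length_pipePath (by omega) (hB.exitRow_eq hm1 (by omega))
  have hlq := length_pipePath hM (hB.exitRow_eq (by omega) hM)
  obtain ⟨hcross, hdd⟩ := hB.tile_eq_cross_of_mem hm1 (by omega) (by omega) hM hmM.ne
    (h ▸ pipeState_mem (by omega)) (h' ▸ pipeState_mem hk)
  cases d <;> cases d' <;> simp only [ne_eq, not_true_eq_false] at hdd
  · exact .inl (rowGap_pred_eq_one (by omega) hk h h')
  · have hk1 := succ_lt_length_of_outDir_north hM (hB.exitRow_eq (by omega) hM) hk
      (by simp [h', hcross, outDir])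
    exact .inr ⟨hk1, rowGap_succ_eq_one hcross (by omega) hk1 h h'⟩

theorem MemBPD.rowGap_last_nonpos (hB : MemBPD v g) {m M : ℕ} (hm1 : 1 ≤ m) (hmM : m < M)
    (hM : M ≤ g.n) (hlt : v.symm m < v.symm M) :
    rowGap g m M ((pipePath g M).length - 1) ≤ 0 := by
  have hem := hB.exitRow_eq hm1 (by omega : m ≤ g.n)
  have heM := hB.exitRow_eq (by omega : 1 ≤ M) hM
  have hlp := length_pipePath (by omega) hem
  have hlq := length_pipePath hM heM
  obtain ⟨d, hlast, -⟩ := pipeState_last hM heM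
  have hk : (pipePath g M).length - 1 + (M - m) < (pipePath g m).length := by omega
  have hdiag := diagIndex_pipeState hk
  have hcol := (mem_pipePath_bounds (by omega) (pipeState_mem hk)).2.2.1
  rw [rowGap, hlast]
  simp only [diagIndex] at hdiag
  push_cast [Nat.sub_add_cancel (length_pipePath_pos (g := g) (c := M)), hmM.le] at hdiag
  omega

theorem MemBPD.symm_lt_symm_of_passes (hB : MemBPD v g) {m M : ℕ} {z : ℕ × ℕ} (hm1 : 1 ≤ m)
    (hmM : m < M) (hM : M ≤ g.n) (hzm : passes g m z) (hzM : passes g M z) :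
    v.symm M < v.symm m := by
  by_contra! hle
  have hlt : v.symm m < v.symm M := hle.lt_of_ne (v.symm.injective.ne hmM.ne)
  have hlp := length_pipePath (by omega) (hB.exitRow_eq hm1 (by omega : m ≤ g.n))
  have hlq := length_pipePath hM (hB.exitRow_eq (by omega : 1 ≤ M) hM)
  set L := (pipePath g M).length
  have hL : 0 < L := length_pipePath_pos
  obtain ⟨d, hd⟩ := hzm
  obtain ⟨d', hd'⟩ := hzM
  obtain ⟨i, hi, hp⟩ := mem_pipePath_iff.1 hd
  obtain ⟨k, hk, hq⟩ := mem_pipePath_iff.1 hd'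
  obtain rfl : i = k + (M - m) := by
    have h1 := diagIndex_pipeState hi
    have h2 := diagIndex_pipeState hk
    rw [hp] at h1
    rw [hq] at h2
    simp only [diagIndex] at h1 h2
    omega
  suffices ∃ k', k' < L ∧ k' ≠ k ∧ rowGap g m M k' = 0 by
    obtain ⟨k', hk', hne, h0⟩ := this
    have hz := hB.eq_of_passes hm1 (by omega) (by omega) hM hmM.ne ⟨d, hd⟩ ⟨d', hd'⟩
      (passes_of_rowGap_eq_zero hmM.le (by omega) hk' h0) ⟨_, pipeState_mem hk'⟩
    have h1 := diagIndex_pipeState hk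
    have h2 := diagIndex_pipeState hk'
    rw [hq] at h1
    simp only [diagIndex, hz] at h1 h2
    omega
  have hstep : ∀ j, j + 1 < L → |rowGap g m M (j + 1) - rowGap g m M j| ≤ 1 :=
    fun j hj => abs_rowGap_succ_sub_le (by omega) hj
  rcases hB.rowGap_eq_one_of_meet hm1 hmM hM hlt hk hp hq with ⟨hk0, h1⟩ | ⟨hk1, h1⟩
  · obtain ⟨k', -, hk', h0⟩ := exists_eq_zero_of_abs_sub_le_one (Nat.zero_le (k - 1))
      (fun j _ hj => hstep j (by omega)) (rowGap_zero_nonpos (by omega) (by omega)) (by omega)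
    exact ⟨k', by omega, by omega, h0⟩
  · obtain ⟨k', hk', hk'L, h0⟩ := exists_eq_zero_of_abs_sub_le_one
      (D := fun j => -rowGap g m M j) (a := k + 1) (b := L - 1) (by omega)
      (fun j _ hj => by rw [neg_sub_neg, abs_sub_comm]; exact hstep j (by omega)) (by simp [h1])
      (neg_nonneg.2 (hB.rowGap_last_nonpos hm1 hmM hM hlt))
    exact ⟨k', by omega, by omega, neg_eq_zero.1 h0⟩

end BPD

/-- For `v` vexillary and `B ∈ BPD(v)`, the crossing tiles of `B` are
disjoint from `Y_{ρ(v)}`, the Young diagram of the smallest partition containing `D_v`. -/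
theorem stmt12 (v : Perm') (hv : Vexillary v) (B : Grid) (hB : MemBPD v B) :
    ∀ x y : ℕ, 1 ≤ x → 1 ≤ y → y ≤ rhoRow v x → B.tile x y ≠ Tile.cross := by
  intro x y hx hy hyρ hcross
  obtain ⟨r, j, hxr, hrj, hjr, hyj⟩ := exists_rothe_of_le_rhoRow hv.1 hy hyρ
  obtain ⟨-, hxn, -, hyn⟩ : InGrid B x y := by
    by_contra h
    simp [hB.1.2.1 x y h] at hcross
  obtain ⟨a, ha1, ha, hma⟩ :=
    hB.exists_mem_pipePath (d := .north) hx hxn hy hyn (by simp [hcross, outDir])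
  obtain ⟨b, hb1, hb, hmb⟩ :=
    hB.exists_mem_pipePath (d := .east) hx hxn hy hyn (by simp [hcross, outDir])
  have hay : a ≤ y := (mem_pipePath_bounds ha hma).2.1
  have hby : b < y := (mem_pipePath_bounds hb hmb).2.2.2 rfl
  have hax : v.symm a ≤ x := exit_le_row ha (hB.exitRow_eq ha1 ha) hma
  have hbx : v.symm b ≤ x := exit_le_row hb (hB.exitRow_eq hb1 hb) hmb
  have hab : a ≠ b := by
    rintro rfl
    simpa using eq_of_mem_pipePath hma hmb rfl
  rcases hab.lt_or_gt with hab | hab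
  · exact (hv.symm_lt_symm hab (hax.trans hxr) hrj hjr (by omega)).not_gt
      (hB.symm_lt_symm_of_passes (z := (x, y)) ha1 hab hb ⟨_, hma⟩ ⟨_, hmb⟩)
  · exact (hv.symm_lt_symm hab (hbx.trans hxr) hrj hjr (by omega)).not_gt
      (hB.symm_lt_symm_of_passes (z := (x, y)) hb1 hab ha ⟨_, hmb⟩ ⟨_, hma⟩)

end BPDPaper
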